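/- Suppose 1 ≤ k ≤ d−1 and let i* ∈ {1,...,n} be an index minimizing f({i}) over all singletons i ∈ {1,...,n}. Then every subset S ⊆ {1,...,n} with |S| = k and i* ∈ S satisfies f(S) ≤ ((d−1)/(d−k))·z_k. In particular, the output S_F of the forward greedy algorithm (which begins with S = {i*} and at each step adds the element minimizing the resulting value of f until |S| = k) satisfies f(S_F) ≤ ((d−1)/(d−k))·z_k. -/

import Mathlib

/-!
Write `M_S = ∑_{i ∈ S} a_i a_iᵀ + λ I`. Taking the trace of `M_S M_S⁻¹ = I` gives
`∑_{i ∈ S} a_iᵀ M_S⁻¹ a_i + λ f(S) = d`. Inversion reverses the Loewner order and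
`M_{i} ≤ M_S` for `i ∈ S`, so each leverage `a_iᵀ M_S⁻¹ a_i` is at most
`a_iᵀ M_{i}⁻¹ a_i = d - λ f({i}) ≤ d - λ f({i*})`; hence `λ f(S) ≥ d - k (d - λ f({i*}))`
whenever `|S| = k`. Since a leverage never exceeds `1`, also `λ f({i*}) ≥ d - 1`, and the two
bounds combine to `f({i*}) ≤ (d - 1)/(d - k) · f(S)` for every `k`-set `S`, i.e.
`f({i*}) ≤ (d - 1)/(d - k) · z_k`. Both claims follow by monotonicity of `f`, as the greedy set
contains `i*`.
-/

open Matrix Finset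

noncomputable section


/-- The information matrix `∑_{i ∈ S} a_i a_iᵀ + λ I_d`. -/
def infoM (d n : ℕ) (a : Fin n → Fin d → ℝ) (lam : ℝ) (S : Finset (Fin n)) :
    Matrix (Fin d) (Fin d) ℝ :=
  (∑ i ∈ S, Matrix.vecMulVec (a i) (a i)) + lam • (1 : Matrix (Fin d) (Fin d) ℝ)

/-- `f(S) = tr((∑_{i∈S} a_i a_iᵀ + λ I_d)⁻¹)`. -/
def fS (d n : ℕ) (a : Fin n → Fin d → ℝ) (lam : ℝ) (S : Finset (Fin n)) : ℝ :=
  Matrix.trace (infoM d n a lam S)⁻¹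

/-- `z_k = min_{|S| = k} f(S)`. -/
def zk (d n : ℕ) (a : Fin n → Fin d → ℝ) (lam : ℝ) (k : ℕ) : ℝ :=
  sInf {r : ℝ | ∃ S : Finset (Fin n), S.card = k ∧ fS d n a lam S = r}

end


namespace Matrix

variable {ι : Type*} [Fintype ι]

lemma dotProduct_vecMulVec_self_mulVec (u x : ι → ℝ) :
    x ⬝ᵥ (vecMulVec u u *ᵥ x) = (u ⬝ᵥ x) ^ 2 := by
  rw [vecMulVec_mulVec, op_smul_eq_smul, dotProduct_smul, smul_eq_mul, dotProduct_comm, sq]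

lemma posSemidef_vecMulVec_self (u : ι → ℝ) : (vecMulVec u u).PosSemidef := by
  simpa using posSemidef_vecMulVec_self_star u

lemma trace_vecMulVec_self_mul (u : ι → ℝ) (P : Matrix ι ι ℝ) :
    trace (vecMulVec u u * P) = u ⬝ᵥ (P *ᵥ u) := by
  rw [vecMulVec_mul, trace_vecMulVec, dotProduct_mulVec, dotProduct_comm]

variable [DecidableEq ι]

lemma PosDef.mulVec_inv_mulVec {M : Matrix ι ι ℝ} (hM : M.PosDef) (x : ι → ℝ) :
    M *ᵥ (M⁻¹ *ᵥ x) = x := by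
  rw [mulVec_mulVec, mul_nonsing_inv M ((isUnit_iff_isUnit_det M).mp hM.isUnit), one_mulVec]

lemma dotProduct_inv_mulVec_le_of_posSemidef_sub {M N : Matrix ι ι ℝ} (hN : N.PosDef)
    (hNM : (M - N).PosSemidef) (x : ι → ℝ) :
    x ⬝ᵥ (M⁻¹ *ᵥ x) ≤ x ⬝ᵥ (N⁻¹ *ᵥ x) := by
  have hM : M.PosDef := by simpa using hN.add_posSemidef hNM
  set y := M⁻¹ *ᵥ x
  set w := N⁻¹ *ᵥ x
  have hMy : M *ᵥ y = x := hM.mulVec_inv_mulVec x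
  have hNw : N *ᵥ w = x := hN.mulVec_inv_mulVec x
  have hwN : w ᵥ* N = x := by
    rw [← mulVec_transpose, (isHermitian_iff_isSymm.mp hN.isHermitian).eq, hNw]
  have hgap : y ⬝ᵥ (N *ᵥ y) ≤ y ⬝ᵥ x := by
    have := hNM.dotProduct_mulVec_nonneg y
    rw [star_trivial, sub_mulVec, dotProduct_sub, hMy] at this
    linarith
  have hsq : 0 ≤ (w - y) ⬝ᵥ (N *ᵥ (w - y)) := by
    simpa using hN.posSemidef.dotProduct_mulVec_nonneg (w - y)
  rw [mulVec_sub, dotProduct_sub, sub_dotProduct, sub_dotProduct, hNw, dotProduct_mulVec w,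
    hwN, dotProduct_comm x y] at hsq
  rw [dotProduct_comm x y, dotProduct_comm x w]
  linarith

lemma trace_inv_le_of_posSemidef_sub {M N : Matrix ι ι ℝ} (hN : N.PosDef)
    (hNM : (M - N).PosSemidef) : trace M⁻¹ ≤ trace N⁻¹ := by
  refine Finset.sum_le_sum fun j _ => ?_
  simpa [mulVec_single_one, single_one_dotProduct] using
    dotProduct_inv_mulVec_le_of_posSemidef_sub hN hNM (Pi.single j 1)

lemma dotProduct_inv_mulVec_le_one {M : Matrix ι ι ℝ} (hM : M.PosDef) {u : ι → ℝ}
    (hu : (M - vecMulVec u u).PosSemidef) : u ⬝ᵥ (M⁻¹ *ᵥ u) ≤ 1 := by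
  set y := M⁻¹ *ᵥ u
  have := hu.dotProduct_mulVec_nonneg y
  rw [star_trivial, sub_mulVec, dotProduct_sub, hM.mulVec_inv_mulVec,
    dotProduct_vecMulVec_self_mulVec, dotProduct_comm y u] at this
  nlinarith

end Matrix

section Design

variable {d n : ℕ} (a : Fin n → Fin d → ℝ) {lam : ℝ}

lemma infoM_posDef (hlam : 0 < lam) (S : Finset (Fin n)) : (infoM d n a lam S).PosDef :=
  PosDef.posSemidef_add (posSemidef_sum S fun i _ => posSemidef_vecMulVec_self (a i))
    (PosDef.one.smul hlam)

lemma posSemidef_infoM_sub_infoM (lam : ℝ) {S T : Finset (Fin n)} (hST : S ⊆ T) :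
    (infoM d n a lam T - infoM d n a lam S).PosSemidef := by
  rw [infoM, infoM, ← sum_sdiff hST, add_assoc, add_sub_cancel_right]
  exact posSemidef_sum _ fun i _ => posSemidef_vecMulVec_self (a i)

lemma fS_antitone (hlam : 0 < lam) : Antitone (fS d n a lam) := fun _ _ hST =>
  trace_inv_le_of_posSemidef_sub (infoM_posDef a hlam _) (posSemidef_infoM_sub_infoM a lam hST)

lemma sum_leverage_add_mul_fS (hlam : 0 < lam) (S : Finset (Fin n)) :
    ∑ i ∈ S, a i ⬝ᵥ ((infoM d n a lam S)⁻¹ *ᵥ a i) + lam * fS d n a lam S = d := by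
  have h := mul_nonsing_inv _ ((isUnit_iff_isUnit_det _).mp (infoM_posDef a hlam S).isUnit)
  rw [infoM, add_mul, Finset.sum_mul, smul_mul_assoc, one_mul] at h
  simpa [trace_add, trace_sum, trace_vecMulVec_self_mul, fS, infoM] using congrArg trace h

lemma leverage_le_of_mem (hlam : 0 < lam) {S : Finset (Fin n)} {i : Fin n} (hi : i ∈ S) :
    a i ⬝ᵥ ((infoM d n a lam S)⁻¹ *ᵥ a i) ≤ d - lam * fS d n a lam {i} := by
  have hsingle := sum_leverage_add_mul_fS a hlam {i}
  rw [sum_singleton] at hsingle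
  have := dotProduct_inv_mulVec_le_of_posSemidef_sub (infoM_posDef a hlam {i})
    (posSemidef_infoM_sub_infoM a lam (singleton_subset_iff.mpr hi)) (a i)
  linarith

lemma sub_one_le_mul_fS_singleton (hlam : 0 < lam) (i : Fin n) :
    (d : ℝ) - 1 ≤ lam * fS d n a lam {i} := by
  have hsingle := sum_leverage_add_mul_fS a hlam {i}
  rw [sum_singleton] at hsingle
  have hrest : infoM d n a lam {i} - vecMulVec (a i) (a i) = lam • 1 := by
    simp [infoM]
  have := dotProduct_inv_mulVec_le_one (infoM_posDef a hlam {i})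
    (hrest ▸ PosSemidef.one.smul hlam.le)
  linarith

lemma div_mul_fS_singleton_le_fS (hlam : 0 < lam) {k : ℕ} (hk : 1 ≤ k) (hkd : k < d)
    {istar : Fin n} (histar : ∀ j, fS d n a lam {istar} ≤ fS d n a lam {j})
    {S : Finset (Fin n)} (hS : S.card = k) :
    ((d : ℝ) - k) / (d - 1) * fS d n a lam {istar} ≤ fS d n a lam S := by
  have hk' : (1 : ℝ) ≤ k := by exact_mod_cast hk
  have hkd' : (k : ℝ) + 1 ≤ d := by exact_mod_cast hkd
  have hsum : ∑ i ∈ S, a i ⬝ᵥ ((infoM d n a lam S)⁻¹ *ᵥ a i)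
      ≤ k * (d - lam * fS d n a lam {istar}) := by
    rw [← hS, ← nsmul_eq_mul, ← sum_const]
    exact sum_le_sum fun i hi => (leverage_le_of_mem a hlam hi).trans
      (by gcongr; exact histar i)
  have hS_id := sum_leverage_add_mul_fS a hlam S
  have hstar := sub_one_le_mul_fS_singleton a hlam istar
  rw [div_mul_eq_mul_div, div_le_iff₀ (by linarith), ← mul_le_mul_iff_right₀ hlam]
  -- `(d - 1) * λ f(S) - (d - k) * λ f({i*}) ≥ d (k - 1) (λ f({i*}) - (d - 1)) ≥ 0`
  nlinarith [mul_nonneg (mul_nonneg (by linarith : (0 : ℝ) ≤ d) (sub_nonneg.mpr hk'))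
    (sub_nonneg.mpr hstar)]

lemma le_zk {k : ℕ} (hkn : k ≤ n) {c : ℝ}
    (h : ∀ S : Finset (Fin n), S.card = k → c ≤ fS d n a lam S) : c ≤ zk d n a lam k := by
  obtain ⟨S, -, hS⟩ := exists_subset_card_eq (s := (univ : Finset (Fin n)))
    (by simpa using hkn)
  exact le_csInf ⟨_, S, hS, rfl⟩ fun _ ⟨S, hS, hfS⟩ => hfS ▸ h S hS

end Design

lemma le_of_forall_le_succ_of_le_of_le {β : Type*} [Preorder β] {f : ℕ → β} {a b : ℕ}
    (h : ∀ j, a ≤ j → j < b → f j ≤ f (j + 1)) {c : ℕ} (hac : a ≤ c) (hcb : c ≤ b) :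
    f a ≤ f c := by
  induction c, hac using Nat.le_induction with
  | base => exact le_rfl
  | succ c hac ih => exact (ih (by omega)).trans (h c hac hcb)

theorem stmt18_general (d n : ℕ) (hdn : d ≤ n)
    (a : Fin n → Fin d → ℝ) (lam : ℝ) (hlam : 0 < lam)
    (k : ℕ) (hk1 : 1 ≤ k) (hkd : k < d)
    (istar : Fin n) (histar : ∀ j : Fin n, fS d n a lam {istar} ≤ fS d n a lam {j}) :
    (∀ S : Finset (Fin n), S.card = k → istar ∈ S →
      fS d n a lam S ≤ (((d : ℝ) - 1) / ((d : ℝ) - k)) * zk d n a lam k) ∧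
    (∀ T : ℕ → Finset (Fin n), T 1 = {istar} →
      (∀ j, 1 ≤ j → j < k → ∃ i, i ∉ T j ∧
        (∀ i', i' ∉ T j →
          fS d n a lam (insert i (T j)) ≤ fS d n a lam (insert i' (T j))) ∧
        T (j + 1) = insert i (T j)) →
      fS d n a lam (T k) ≤ (((d : ℝ) - 1) / ((d : ℝ) - k)) * zk d n a lam k) := by
  have hd1 : (0 : ℝ) < d - 1 := sub_pos.mpr (by exact_mod_cast hk1.trans_lt hkd)
  have hdk : (0 : ℝ) < d - k := sub_pos.mpr (by exact_mod_cast hkd)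
  have hz := le_zk a (hkd.le.trans hdn) fun S hS =>
    div_mul_fS_singleton_le_fS a hlam hk1 hkd histar hS
  have hstar : fS d n a lam {istar} ≤ ((d : ℝ) - 1) / (d - k) * zk d n a lam k :=
    calc fS d n a lam {istar}
        = ((d : ℝ) - 1) / (d - k) * (((d : ℝ) - k) / (d - 1) * fS d n a lam {istar}) := by
          field_simp
      _ ≤ ((d : ℝ) - 1) / (d - k) * zk d n a lam k := by gcongr
  have hbound (S : Finset (Fin n)) (hS : istar ∈ S) :
      fS d n a lam S ≤ ((d : ℝ) - 1) / (d - k) * zk d n a lam k :=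
    (fS_antitone a hlam (singleton_subset_iff.mpr hS)).trans hstar
  refine ⟨fun S _ hS => hbound S hS, fun T hT1 hstep => hbound _ ?_⟩
  have hmono : T 1 ⊆ T k := le_of_forall_le_succ_of_le_of_le (fun j hj hjk => by
    obtain ⟨i, -, -, hTi⟩ := hstep j hj hjk
    exact hTi ▸ subset_insert i (T j)) hk1 le_rfl
  exact hmono (hT1 ▸ mem_singleton_self istar)

theorem stmt18 (d n : ℕ) (hd : 1 ≤ d) (hdn : d ≤ n)
    (a : Fin n → Fin d → ℝ) (lam : ℝ) (hlam : 0 < lam)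
    (k : ℕ) (hk1 : 1 ≤ k) (hkd : k < d)
    (istar : Fin n) (histar : ∀ j : Fin n, fS d n a lam {istar} ≤ fS d n a lam {j}) :
    (∀ S : Finset (Fin n), S.card = k → istar ∈ S →
      fS d n a lam S ≤ (((d : ℝ) - 1) / ((d : ℝ) - k)) * zk d n a lam k) ∧
    (∀ T : ℕ → Finset (Fin n), T 1 = {istar} →
      (∀ j, 1 ≤ j → j < k → ∃ i, i ∉ T j ∧
        (∀ i', i' ∉ T j →
          fS d n a lam (insert i (T j)) ≤ fS d n a lam (insert i' (T j))) ∧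
        T (j + 1) = insert i (T j)) →
      fS d n a lam (T k) ≤ (((d : ℝ) - 1) / ((d : ℝ) - k)) * zk d n a lam k) :=
  stmt18_general d n hdn a lam hlam k hk1 hkd istar histar
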